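/- Let μ be a probability measure on ℝ^d with finite second moment and let T : ℝ^d → {x_1,…,x_N} be measurable with T(x) ∈ argmin_i (‖x − x_i‖² − φ_i) for μ-a.e. x. Then for any other measurable map S : ℝ^d → {x_1,…,x_N} with S_#μ = T_#μ, one has ∫ ‖x − T(x)‖² dμ(x) ≤ ∫ ‖x − S(x)‖² dμ(x). -/

import Mathlib

open MeasureTheory

/-- Optimality of power-diagram assignments: among maps into the sites with the same
pushforward, a map that a.e. selects a minimizer of the power distance has the least
quadratic transport cost. -/
theorem power_assignment_optimal {d N : ℕ}
    (μ : Measure (EuclideanSpace ℝ (Fin d))) [IsProbabilityMeasure μ]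
    (hmom : Integrable (fun p => ‖p‖ ^ 2) μ)
    (x : Fin N → EuclideanSpace ℝ (Fin d)) (φ : Fin N → ℝ)
    (T S : EuclideanSpace ℝ (Fin d) → Fin N)
    (hTmeas : Measurable T) (hSmeas : Measurable S)
    (hopt : ∀ᵐ p ∂μ, ∀ i, ‖p - x (T p)‖ ^ 2 - φ (T p) ≤ ‖p - x i‖ ^ 2 - φ i)
    (hpush : ∀ i, μ (T ⁻¹' {i}) = μ (S ⁻¹' {i})) :
    ∫ p, ‖p - x (T p)‖ ^ 2 ∂μ ≤ ∫ p, ‖p - x (S p)‖ ^ 2 ∂μ := by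
  set M : ℝ := ∑ i, ‖x i‖ ^ 2 with hM
  have hxM : ∀ i, ‖x i‖ ^ 2 ≤ M := fun i =>
    Finset.single_le_sum (f := fun j => ‖x j‖ ^ 2) (fun j _ => by positivity) (Finset.mem_univ i)
  -- integrability of cost functions
  have hdom : Integrable (fun p => 2 * ‖p‖ ^ 2 + 2 * M) μ :=
    (hmom.const_mul 2).add (integrable_const _)
  have hbound : ∀ (R : EuclideanSpace ℝ (Fin d) → Fin N) (p : EuclideanSpace ℝ (Fin d)),
      ‖‖p - x (R p)‖ ^ 2‖ ≤ 2 * ‖p‖ ^ 2 + 2 * M := by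
    intro R p
    have h1 : ‖p - x (R p)‖ ≤ ‖p‖ + ‖x (R p)‖ := norm_sub_le _ _
    have h2 : ‖p - x (R p)‖ ^ 2 ≤ (‖p‖ + ‖x (R p)‖) ^ 2 := by
      apply pow_le_pow_left₀ (norm_nonneg _) h1
    have h3 : (‖p‖ + ‖x (R p)‖) ^ 2 ≤ 2 * ‖p‖ ^ 2 + 2 * ‖x (R p)‖ ^ 2 := by
      nlinarith [sq_nonneg (‖p‖ - ‖x (R p)‖)]
    have := hxM (R p)
    rw [Real.norm_eq_abs, abs_of_nonneg (by positivity)]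
    linarith
  have hmeasf : ∀ (R : EuclideanSpace ℝ (Fin d) → Fin N), Measurable R →
      Measurable (fun p => ‖p - x (R p)‖ ^ 2) := by
    intro R hR
    have : Measurable fun p => x (R p) := (measurable_from_top (f := x)).comp hR
    exact ((measurable_id.sub this).norm.pow_const 2)
  have hintT : Integrable (fun p => ‖p - x (T p)‖ ^ 2) μ :=
    hdom.mono' ((hmeasf T hTmeas).aestronglyMeasurable)
      (Filter.Eventually.of_forall (hbound T))
  have hintS : Integrable (fun p => ‖p - x (S p)‖ ^ 2) μ :=
    hdom.mono' ((hmeasf S hSmeas).aestronglyMeasurable)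
      (Filter.Eventually.of_forall (hbound S))
  have hintφ : ∀ (R : EuclideanSpace ℝ (Fin d) → Fin N), Measurable R →
      Integrable (fun p => φ (R p)) μ := by
    intro R hR
    have hm : Measurable fun p => φ (R p) := (measurable_from_top (f := φ)).comp hR
    apply (integrable_const (∑ i, |φ i|)).mono' hm.aestronglyMeasurable
    refine Filter.Eventually.of_forall fun p => ?_
    calc ‖φ (R p)‖ = |φ (R p)| := rfl
      _ ≤ ∑ i, |φ i| := Finset.single_le_sum (f := fun j => |φ j|) (fun j _ => abs_nonneg _) (Finset.mem_univ _)
  have hφT := hintφ T hTmeas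
  have hφS := hintφ S hSmeas
  -- equality of the φ integrals
  have hφeq : ∫ p, φ (T p) ∂μ = ∫ p, φ (S p) ∂μ := by
    have key : ∀ (R : EuclideanSpace ℝ (Fin d) → Fin N), Measurable R →
        ∫ p, φ (R p) ∂μ = ∑ i, (μ (R ⁻¹' {i})).toReal • φ i := by
      intro R hR
      rw [← integral_map hR.aemeasurable
        ((measurable_from_top (f := φ)).aestronglyMeasurable)]
      rw [integral_fintype (by
        apply Integrable.of_finite)]
      congr 1
      ext i
      rw [measureReal_def, Measure.map_apply hR (measurableSet_singleton i)]
    rw [key T hTmeas, key S hSmeas]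
    congr 1
    ext i
    rw [hpush i]
  -- pointwise comparison
  have hpt : ∀ᵐ p ∂μ, ‖p - x (T p)‖ ^ 2 - φ (T p) ≤ ‖p - x (S p)‖ ^ 2 - φ (S p) :=
    hopt.mono fun p h => h (S p)
  have hint1 := hintT.sub hφT
  have hint2 := hintS.sub hφS
  have hcomp : ∫ p, (‖p - x (T p)‖ ^ 2 - φ (T p)) ∂μ ≤
      ∫ p, (‖p - x (S p)‖ ^ 2 - φ (S p)) ∂μ :=
    integral_mono_ae hint1 hint2 hpt
  rw [integral_sub hintT hφT, integral_sub hintS hφS] at hcomp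
  linarith
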